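/- arXiv:quant-ph/0611002 — 2 statements merged into one kernel-verified Lean document; each statement's English description precedes it below -/
import Mathlib

section
/- A set D = {U_1,...,U_K} of unitary d×d matrices satisfies (1/K²)·Σ_{k,k'} |tr(U_k† U_{k'})|⁴ ≥ 2, i.e. the unitary frame potential is bounded below by 2. -/
open MeasureTheory Matrix
open scoped Kronecker ComplexConjugate

noncomputable section

variable {ι : Type} [Fintype ι] [DecidableEq ι]

abbrev UG (ι : Type) [Fintype ι] [DecidableEq ι] := Matrix.unitaryGroup ι ℂ

instance : IsTopologicalGroup (UG ι) where
  continuous_mul := by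
    apply Continuous.subtype_mk
    exact (continuous_subtype_val.comp continuous_fst).matrix_mul
      (continuous_subtype_val.comp continuous_snd)
  continuous_inv := by
    apply Continuous.subtype_mk
    exact continuous_subtype_val.matrix_conjTranspose

theorem isCompact_UG : IsCompact (Matrix.unitaryGroup ι ℂ : Set (Matrix ι ι ℂ)) := by
  have hK : IsCompact (Set.univ.pi fun _ : ι => Set.univ.pi fun _ : ι =>
      Metric.closedBall (0:ℂ) 1) :=
    isCompact_univ_pi fun _ => isCompact_univ_pi fun _ => isCompact_closedBall _ _
  have hof : Continuous (Matrix.of : (ι → ι → ℂ) → Matrix ι ι ℂ) := continuous_id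
  have hK' := hK.image hof
  have hcl : IsClosed (Matrix.unitaryGroup ι ℂ : Set (Matrix ι ι ℂ)) := by
    have he : (Matrix.unitaryGroup ι ℂ : Set (Matrix ι ι ℂ)) =
        (fun A : Matrix ι ι ℂ => A * star A) ⁻¹' {1} := by
      ext A
      simp [Matrix.mem_unitaryGroup_iff]
    rw [he]
    exact IsClosed.preimage (continuous_id.matrix_mul continuous_id.matrix_conjTranspose)
      isClosed_singleton
  apply hK'.of_isClosed_subset hcl
  intro A hA
  have h1 : star A * A = 1 := (Matrix.mem_unitaryGroup_iff').1 hA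
  refine ⟨fun i j => A i j, ?_, rfl⟩
  intro i _
  intro j _
  have h2 : ∑ k, Complex.normSq (A k j) = 1 := by
    have h0 := congrFun (congrFun h1 j) j
    simp only [Matrix.mul_apply, Matrix.one_apply_eq, Matrix.star_apply] at h0
    have h3 : ∀ k : ι, star (A k j) * A k j = (Complex.normSq (A k j) : ℂ) := by
      intro k
      rw [Complex.star_def, Complex.normSq_eq_conj_mul_self]
    simp only [h3] at h0
    exact_mod_cast (by exact_mod_cast h0 : ((∑ k, Complex.normSq (A k j) : ℝ) : ℂ) = 1)
  simp only [Metric.mem_closedBall, dist_zero_right]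
  have h4 : Complex.normSq (A i j) ≤ 1 := by
    rw [← h2]
    exact Finset.single_le_sum (f := fun k => Complex.normSq (A k j))
      (fun k _ => Complex.normSq_nonneg _) (Finset.mem_univ i)
  rw [Complex.normSq_eq_norm_sq] at h4
  nlinarith [norm_nonneg (A i j)]

instance : CompactSpace (UG ι) := isCompact_iff_compactSpace.mp isCompact_UG

instance : MeasurableSpace (UG ι) := borel _
instance : BorelSpace (UG ι) := ⟨rfl⟩

/-- The normalized Haar (probability) measure on the unitary group. -/
def haarUG (ι : Type) [Fintype ι] [DecidableEq ι] : Measure (UG ι) :=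
  Measure.haarMeasure
    (⟨⟨Set.univ, isCompact_univ⟩, by rw [interior_univ]; exact Set.univ_nonempty⟩ :
      TopologicalSpace.PositiveCompacts (UG ι))

/-- Haar average of (U⊗U) ρ (U⊗U)†, defined entrywise. -/
def haarTwirl (ι : Type) [Fintype ι] [DecidableEq ι]
    (ρ : Matrix (ι × ι) (ι × ι) ℂ) : Matrix (ι × ι) (ι × ι) ℂ :=
  Matrix.of fun i j =>
    ∫ u : UG ι,
      ((((u : Matrix ι ι ℂ) ⊗ₖ (u : Matrix ι ι ℂ)) * ρ *
        ((u : Matrix ι ι ℂ) ⊗ₖ (u : Matrix ι ι ℂ))ᴴ) i j) ∂(haarUG ι)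

/-- A finite family of matrices is a unitary 2-design. -/
def IsUnitaryTwoDesign {κ : Type} [Fintype κ] (Us : κ → Matrix ι ι ℂ) : Prop :=
  (∀ k, Us k ∈ Matrix.unitaryGroup ι ℂ) ∧
  ∀ ρ : Matrix (ι × ι) (ι × ι) ℂ,
    ((Fintype.card κ : ℂ))⁻¹ • (∑ k, (Us k ⊗ₖ Us k) * ρ * (Us k ⊗ₖ Us k)ᴴ) = haarTwirl ι ρ

/-- The frame potential. -/
def framePotential {κ : Type} [Fintype κ] (Us : κ → Matrix ι ι ℂ) : ℝ :=
  ((Fintype.card κ : ℝ) ^ 2)⁻¹ *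
    ∑ k : κ, ∑ k' : κ, ‖Matrix.trace ((Us k)ᴴ * Us k')‖ ^ 4

/-! Put `W_k = U_k ⊗ U_k` and let `Φ = ∑_k conj W_k ⊗ W_k`, the matrix of `X ↦ ∑_k W_k X W_kᴴ`
acting on `vec X`. Its squared Frobenius norm is `∑_{k,k'} |tr (W_kᴴ W_k')|² =
∑_{k,k'} |tr (U_kᴴ U_k')|⁴`. The identity and the swap of `ℂᵈ ⊗ ℂᵈ` commute with every `U ⊗ U`,
so for `d ≥ 2` they span a two-dimensional eigenspace of `Φ` with eigenvalue `K`. Bessel's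
inequality, applied to the rows of `Φ` and an orthonormal basis of that eigenspace, gives
`‖Φ‖²_F ≥ 2 K²`. -/

section FrobeniusNorm

variable {𝕜 : Type*} [RCLike 𝕜] {m n κ : Type*} [Fintype m] [Fintype n] [Fintype κ]

theorem ofReal_sum_sq_norm_eq_trace_conjTranspose_mul (A : Matrix m n 𝕜) :
    ((∑ i, ∑ j, ‖A i j‖ ^ 2 : ℝ) : 𝕜) = trace (Aᴴ * A) := by
  simp only [trace, diag, mul_apply, conjTranspose_apply, RCLike.star_def, RCLike.conj_mul]
  push_cast
  exact Finset.sum_comm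

theorem ofReal_sum_sq_norm_sum_eq_sum_trace (B : κ → Matrix m n 𝕜) :
    ((∑ i, ∑ j, ‖(∑ k, B k) i j‖ ^ 2 : ℝ) : 𝕜) = ∑ k, ∑ k', trace ((B k)ᴴ * B k') := by
  simp only [ofReal_sum_sq_norm_eq_trace_conjTranspose_mul, conjTranspose_sum, Matrix.sum_mul,
    Matrix.mul_sum, trace_sum]
  exact Finset.sum_comm

theorem sum_sq_norm_toEuclideanLin_le_of_orthonormal {α : Type*} [Fintype α] [DecidableEq n]
    (A : Matrix m n 𝕜) {v : α → EuclideanSpace 𝕜 n} (hv : Orthonormal 𝕜 v) :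
    ∑ l, ‖toEuclideanLin A (v l)‖ ^ 2 ≤ ∑ i, ∑ j, ‖A i j‖ ^ 2 := by
  let row (i : m) : EuclideanSpace 𝕜 n := WithLp.toLp 2 (star (A i))
  have hrow : ∀ i l, ‖(toEuclideanLin A (v l)) i‖ = ‖inner 𝕜 (v l) (row i)‖ := by
    intro i l
    rw [norm_inner_symm, EuclideanSpace.inner_eq_star_dotProduct]
    simp [row, toLpLin_apply, mulVec, dotProduct_comm]
  have hnorm : ∀ i, ‖row i‖ ^ 2 = ∑ j, ‖A i j‖ ^ 2 := fun i => by
    simp [row, EuclideanSpace.norm_sq_eq]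
  calc ∑ l, ‖toEuclideanLin A (v l)‖ ^ 2
      = ∑ i, ∑ l, ‖inner 𝕜 (v l) (row i)‖ ^ 2 := by
        simp only [EuclideanSpace.norm_sq_eq, hrow]
        exact Finset.sum_comm
    _ ≤ ∑ i, ‖row i‖ ^ 2 := Finset.sum_le_sum fun i _ => Orthonormal.sum_inner_products_le _ hv
    _ = ∑ i, ∑ j, ‖A i j‖ ^ 2 := by simp only [hnorm]

theorem sq_norm_mul_finrank_eigenspace_le [DecidableEq n] (A : Matrix n n 𝕜) (c : 𝕜) :
    ‖c‖ ^ 2 * Module.finrank 𝕜 (Module.End.eigenspace (toEuclideanLin A) c) ≤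
      ∑ i, ∑ j, ‖A i j‖ ^ 2 := by
  set E := Module.End.eigenspace (toEuclideanLin A) c
  let b := stdOrthonormalBasis 𝕜 E
  have hb : Orthonormal 𝕜 (E.subtypeₗᵢ ∘ b) := b.orthonormal.comp_linearIsometry E.subtypeₗᵢ
  have heigen : ∀ l, ‖toEuclideanLin A (b l)‖ ^ 2 = ‖c‖ ^ 2 := fun l => by
    have hbl : ‖(b l : EuclideanSpace 𝕜 n)‖ = 1 := b.orthonormal.1 l
    rw [Module.End.mem_eigenspace_iff.1 (b l).2, norm_smul, hbl, mul_one]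
  calc ‖c‖ ^ 2 * Module.finrank 𝕜 E = ∑ l, ‖toEuclideanLin A (b l)‖ ^ 2 := by
        simp [heigen, mul_comm]
    _ ≤ ∑ i, ∑ j, ‖A i j‖ ^ 2 := sum_sq_norm_toEuclideanLin_le_of_orthonormal A hb

end FrobeniusNorm

section ConjSum

variable {𝕜 : Type*} [RCLike 𝕜] {m n κ : Type*} [Fintype n] [Fintype κ]

def conjSumMatrix (W : κ → Matrix m n 𝕜) : Matrix (m × m) (n × n) 𝕜 :=
  ∑ k, (W k)ᴴᵀ ⊗ₖ W k

theorem conjSumMatrix_mulVec_vec (W : κ → Matrix m n 𝕜) (X : Matrix n n 𝕜) :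
    conjSumMatrix W *ᵥ vec X = vec (∑ k, W k * X * (W k)ᴴ) := by
  simp only [conjSumMatrix, sum_mulVec, kronecker_mulVec_vec, transpose_transpose, vec_sum]

theorem trace_conjTranspose_kronecker_mul_kronecker [Fintype m] (W V : Matrix m n 𝕜) :
    trace ((Wᴴᵀ ⊗ₖ W)ᴴ * (Vᴴᵀ ⊗ₖ V)) = (‖trace (Wᴴ * V)‖ ^ 2 : ℝ) := by
  have hconj : Wᴴᵀᴴ * Vᴴᵀ = ((Wᴴ * V)ᴴ)ᵀ := by
    rw [← conjTranspose_transpose_eq_transpose_conjTranspose W, conjTranspose_conjTranspose,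
      conjTranspose_mul, transpose_mul, conjTranspose_conjTranspose]
  rw [conjTranspose_kronecker, ← mul_kronecker_mul, trace_kronecker, hconj, trace_transpose,
    trace_conjTranspose, RCLike.star_def, RCLike.conj_mul]
  norm_cast

theorem sum_sq_norm_trace_eq_sum_sq_norm_conjSumMatrix [Fintype m] (W : κ → Matrix m n 𝕜) :
    ∑ k, ∑ k', ‖trace ((W k)ᴴ * W k')‖ ^ 2 = ∑ i, ∑ j, ‖conjSumMatrix W i j‖ ^ 2 := by
  apply RCLike.ofReal_injective (K := 𝕜)
  rw [conjSumMatrix, ofReal_sum_sq_norm_sum_eq_sum_trace]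
  simp only [trace_conjTranspose_kronecker_mul_kronecker]
  norm_cast

theorem toLp_vec_mem_eigenspace_conjSumMatrix [DecidableEq n] {W : κ → Matrix n n 𝕜}
    {X : Matrix n n 𝕜} (hX : ∀ k, W k * X * (W k)ᴴ = X) :
    WithLp.toLp 2 (vec X) ∈
      Module.End.eigenspace (toEuclideanLin (conjSumMatrix W)) (Fintype.card κ) := by
  rw [Module.End.mem_eigenspace_iff, toLpLin_toLp, toLin'_apply, conjSumMatrix_mulVec_vec]
  simp only [hX, Finset.sum_const, Finset.card_univ, ← Nat.cast_smul_eq_nsmul 𝕜, vec_smul,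
    WithLp.toLp_smul]

end ConjSum

section SwapMatrix

variable {R : Type*} {n : Type*} [DecidableEq n]

def swapMatrix (n R : Type*) [DecidableEq n] [Zero R] [One R] : Matrix (n × n) (n × n) R :=
  Equiv.Perm.permMatrix R (Equiv.prodComm n n)

theorem kronecker_self_commute_swapMatrix [Fintype n] [CommSemiring R] (U : Matrix n n R) :
    Commute (U ⊗ₖ U) (swapMatrix n R) := by
  ext ⟨a, b⟩ ⟨c, d⟩
  simp [swapMatrix, mul_apply, Prod.swap_eq_iff_eq_swap, mul_comm]

theorem linearIndependent_vec_one_swapMatrix [Ring R] [Nontrivial R] [Nontrivial n] :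
    LinearIndependent R ![vec (1 : Matrix (n × n) (n × n) R), vec (swapMatrix n R)] := by
  obtain ⟨a, b, hab⟩ := exists_pair_ne n
  rw [LinearIndependent.pair_iff]
  intro s t hst
  have hdiag := congrFun hst ((a, a), (a, a))
  have hoff := congrFun hst ((a, b), (a, b))
  simp [vec, swapMatrix, hab] at hdiag hoff
  exact ⟨hoff, by simpa [hoff] using hdiag⟩

end SwapMatrix

section FramePotential

variable {𝕜 : Type*} [RCLike 𝕜] {n κ : Type*} [Fintype n] [DecidableEq n] [Fintype κ]

theorem two_le_finrank_eigenspace_conjSumMatrix_kronecker_self [Nontrivial n]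
    {U : κ → Matrix n n 𝕜} (hU : ∀ k, U k ∈ unitaryGroup n 𝕜) :
    2 ≤ Module.finrank 𝕜 (Module.End.eigenspace
      (toEuclideanLin (conjSumMatrix fun k => U k ⊗ₖ U k)) (Fintype.card κ : 𝕜)) := by
  set E := Module.End.eigenspace
    (toEuclideanLin (conjSumMatrix fun k => U k ⊗ₖ U k)) (Fintype.card κ : 𝕜)
  have hfix : ∀ X, (∀ k, Commute (U k ⊗ₖ U k) X) → WithLp.toLp 2 (vec X) ∈ E := by
    refine fun X hX => toLp_vec_mem_eigenspace_conjSumMatrix fun k => ?_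
    have hW := kronecker_mem_unitary (hU k) (hU k)
    rw [(hX k).eq, mul_assoc, ← star_eq_conjTranspose, Unitary.mul_star_self_of_mem hW, mul_one]
  let v : Fin 2 → EuclideanSpace 𝕜 ((n × n) × (n × n)) :=
    WithLp.toLp 2 ∘ ![vec 1, vec (swapMatrix n 𝕜)]
  have hv : LinearIndependent 𝕜 v :=
    (linearIndependent_vec_one_swapMatrix (R := 𝕜) (n := n)).map'
      (WithLp.linearEquiv 2 𝕜 ((n × n) × (n × n) → 𝕜)).symm.toLinearMap (LinearEquiv.ker _)
  have hspan : Submodule.span 𝕜 (Set.range v) ≤ E := by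
    rw [Submodule.span_le, Set.range_subset_iff]
    intro i
    fin_cases i
    · exact hfix 1 fun k => Commute.one_right _
    · exact hfix _ fun k => kronecker_self_commute_swapMatrix (U k)
  calc 2 = Module.finrank 𝕜 (Submodule.span 𝕜 (Set.range v)) := by
        rw [finrank_span_eq_card hv, Fintype.card_fin]
    _ ≤ Module.finrank 𝕜 E := Submodule.finrank_mono hspan

theorem two_mul_sq_card_le_sum_norm_trace_pow_four [Nontrivial n] (U : κ → Matrix n n 𝕜)
    (hU : ∀ k, U k ∈ unitaryGroup n 𝕜) :
    2 * (Fintype.card κ : ℝ) ^ 2 ≤ ∑ k, ∑ k', ‖trace ((U k)ᴴ * U k')‖ ^ 4 := by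
  have htrace : ∀ k k', ‖trace ((U k)ᴴ * U k')‖ ^ 4 =
      ‖trace ((U k ⊗ₖ U k)ᴴ * (U k' ⊗ₖ U k'))‖ ^ 2 := fun k k' => by
    rw [conjTranspose_kronecker, ← mul_kronecker_mul, trace_kronecker, norm_mul]
    ring
  calc 2 * (Fintype.card κ : ℝ) ^ 2
      ≤ ‖(Fintype.card κ : 𝕜)‖ ^ 2 * Module.finrank 𝕜 (Module.End.eigenspace
          (toEuclideanLin (conjSumMatrix fun k => U k ⊗ₖ U k)) (Fintype.card κ : 𝕜)) := by
        rw [RCLike.norm_natCast, mul_comm]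
        gcongr
        exact_mod_cast two_le_finrank_eigenspace_conjSumMatrix_kronecker_self hU
    _ ≤ _ := sq_norm_mul_finrank_eigenspace_le _ _
    _ = ∑ k, ∑ k', ‖trace ((U k)ᴴ * U k')‖ ^ 4 := by
        rw [← sum_sq_norm_trace_eq_sum_sq_norm_conjSumMatrix]
        simp only [htrace]

end FramePotential

/-- the unitary frame potential of any finite set of unitary
`d × d` matrices is bounded below by `2`. -/
theorem framePotential_ge_two (d K : ℕ) (hd : 2 ≤ d) (hK : 0 < K)
    (Us : Fin K → Matrix (Fin d) (Fin d) ℂ)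
    (hU : ∀ k, Us k ∈ Matrix.unitaryGroup (Fin d) ℂ) :
    2 ≤ framePotential Us := by
  have hnontriv : Nontrivial (Fin d) := Fin.nontrivial_iff_two_le.2 hd
  have hK2 : (0 : ℝ) < (K : ℝ) ^ 2 := by positivity
  have hbound := two_mul_sq_card_le_sum_norm_trace_pow_four Us hU
  rw [Fintype.card_fin] at hbound
  rw [framePotential, Fintype.card_fin, le_inv_mul_iff₀ hK2]
  linarith
end
end

section
/- Let F be a finite field of odd order d, and for a ∈ F let M_a = {λ(a,1) : λ ∈ F} ⊂ F², with stabilizer states B^{(a)}_b = (1/d)·Σ_λ χ(bλ)·w(λa, λ). Then tr(B^{(a)}_b · B^{(a')}_{b'}) = δ_{b,b'} if a = a' and = 1/d if a ≠ a'. Together with the computational basis this yields d+1 mutually unbiased bases of ℂ^d. -/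
open scoped Classical
open Matrix

noncomputable section

/-- The finite field `𝔽_{p^m}`. -/
abbrev GF (p m : ℕ) [Fact p.Prime] := GaloisField p m

noncomputable instance (p m : ℕ) [Fact p.Prime] : Fintype (GF p m) :=
  Fintype.ofFinite _

/-- The standard additive character `χ(a) = exp(2πi·Tr_{F/𝔽_p}(a)/p)`. -/
def stdChar (p m : ℕ) [Fact p.Prime] (a : GF p m) : ℂ :=
  Complex.exp (2 * Real.pi * Complex.I *
    ((Algebra.trace (ZMod p) (GF p m) a).val : ℂ) / p)

/-- The shift operator `x̂(q)|x⟩ = |x+q⟩`. -/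
def shiftOp (p m : ℕ) [Fact p.Prime] (q : GF p m) : Matrix (GF p m) (GF p m) ℂ :=
  Matrix.of fun x y => if x = y + q then 1 else 0

/-- The boost operator `ẑ(b)|x⟩ = χ(bx)|x⟩`. -/
def boostOp (p m : ℕ) [Fact p.Prime] (b : GF p m) : Matrix (GF p m) (GF p m) ℂ :=
  Matrix.diagonal fun x => stdChar p m (b * x)

/-- The Weyl operator `w(a,b) = χ(−2⁻¹ab)·ẑ(a)·x̂(b)`. -/
def weylOp (p m : ℕ) [Fact p.Prime] (a : GF p m × GF p m) :
    Matrix (GF p m) (GF p m) ℂ :=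
  stdChar p m (-((2 : GF p m)⁻¹ * a.1 * a.2)) • (boostOp p m a.1 * shiftOp p m a.2)

/-- The symplectic form `[a,b] = a₁b₂ − a₂b₁` on phase space `F × F`. -/
def sympForm (p m : ℕ) [Fact p.Prime] (a b : GF p m × GF p m) : GF p m :=
  a.1 * b.2 - a.2 * b.1

/-- The stabilizer-state projection `B^{(a)}_b = (1/d)·Σ_λ χ(bλ)·w(λa, λ)`. -/
def mubProj (p m : ℕ) [Fact p.Prime] (a b : GF p m) : Matrix (GF p m) (GF p m) ℂ :=
  (Fintype.card (GF p m) : ℂ)⁻¹ •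
    ∑ lam : GF p m, stdChar p m (b * lam) • weylOp p m (lam * a, lam)

/-!
Only `λ = x - y` contributes to the entry `(x, y)` of `B^{(a)}_b = d⁻¹ Σ_λ χ(bλ) w(λa, λ)`, and
since `2` is invertible that entry is `d⁻¹ χ(q(x) - q(y))` with the quadratic phase
`q(x) = a x²/2 + b x`; so `B^{(a)}_b` is `d⁻¹` times the projector onto the vector `(χ(q(x)))_x`.
Its diagonal is constantly `d⁻¹`, which is unbiasedness with respect to the computational basis,
and `tr(B^{(a)}_b B^{(a')}_{b'}) = d⁻² Σ_{x,y} χ(Q(x) - Q(y))` for `Q = q - q'`. Substituting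
`x = y + t` factors this double sum as `Σ_t χ(Q(t)) Σ_y χ((a - a') t y)`. For `a ≠ a'` the inner
sum vanishes unless `t = 0`, leaving `d`; for `a = a'` it is always `d`, leaving
`d Σ_t χ((b - b') t) = d² δ_{b,b'}`.
-/

namespace AddChar

theorem sum_sum_sub_quadratic {R M : Type*} [CommRing R] [Fintype R] [CommRing M]
    (ψ : AddChar R M) (c e : R) :
    ∑ x, ∑ y, ψ ((c * x ^ 2 + e * x) - (c * y ^ 2 + e * y)) =
      ∑ t, ψ (c * t ^ 2 + e * t) * ∑ y, ψ (y * (2 * c * t)) := by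
  have shift (y : R) : ∑ x, ψ ((c * x ^ 2 + e * x) - (c * y ^ 2 + e * y)) =
      ∑ t, ψ (c * t ^ 2 + e * t) * ψ (y * (2 * c * t)) := by
    rw [← Equiv.sum_comp (Equiv.addRight y)]
    refine Finset.sum_congr rfl fun t _ => ?_
    rw [← map_add_eq_mul, Equiv.coe_addRight]
    ring_nf
  rw [Finset.sum_comm]
  simp_rw [shift, Finset.mul_sum]
  exact Finset.sum_comm

variable {F M : Type*} [Field F] [Fintype F] [CommRing M] [IsDomain M] {ψ : AddChar F M}

theorem sum_sum_sub_linear (hψ : ψ.IsPrimitive) (e : F) :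
    ∑ x, ∑ y, ψ (e * x - e * y) = if e = 0 then (Fintype.card F : M) ^ 2 else 0 := by
  simp_rw [sub_eq_add_neg, map_add_eq_mul, ← Finset.sum_mul_sum, mul_comm e, ← mul_neg,
    sum_mulShift _ hψ, neg_eq_zero]
  split_ifs <;> ring

theorem sum_sum_sub_quadratic_of_ne_zero (hψ : ψ.IsPrimitive) (h2 : (2 : F) ≠ 0) {c : F}
    (hc : c ≠ 0) (e : F) :
    ∑ x, ∑ y, ψ ((c * x ^ 2 + e * x) - (c * y ^ 2 + e * y)) = Fintype.card F := by
  simp [sum_sum_sub_quadratic, sum_mulShift _ hψ, h2, hc]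

end AddChar

section

variable (p m : ℕ) [Fact p.Prime]

def stdAddChar : AddChar (GF p m) ℂ :=
  (AddChar.zmodChar p
      (Complex.isPrimitiveRoot_exp p (Fact.out : p.Prime).ne_zero).pow_eq_one).compAddMonoidHom
    (Algebra.trace (ZMod p) (GF p m)).toAddMonoidHom

theorem stdChar_eq_stdAddChar : stdChar p m = stdAddChar p m := by
  ext a
  simp only [stdAddChar, AddChar.compAddMonoidHom_apply, LinearMap.toAddMonoidHom_coe,
    AddChar.zmodChar_apply, stdChar, ← Complex.exp_nat_mul]
  ring_nf

theorem stdAddChar_isPrimitive : (stdAddChar p m).IsPrimitive := by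
  refine AddChar.IsPrimitive.of_ne_one (AddChar.ne_one_iff.mpr ?_)
  obtain ⟨a, ha⟩ := Algebra.trace_surjective (ZMod p) (GF p m) 1
  refine ⟨a, ?_⟩
  simp only [stdAddChar, AddChar.compAddMonoidHom_apply, LinearMap.toAddMonoidHom_coe, ha,
    AddChar.zmodChar_apply, ZMod.val_one, pow_one]
  exact (Complex.isPrimitiveRoot_exp p (Fact.out : p.Prime).ne_zero).ne_one
    (Fact.out : p.Prime).one_lt

theorem two_ne_zero_of_ne_two (hp : p ≠ 2) : (2 : GF p m) ≠ 0 :=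
  Ring.two_ne_zero (by rwa [ringChar.eq (GF p m) p])

variable {p m}

theorem weylOp_apply (u : GF p m × GF p m) (x y : GF p m) :
    weylOp p m u x y =
      if x = y + u.2 then stdAddChar p m (u.1 * x - 2⁻¹ * u.1 * u.2) else 0 := by
  simp only [weylOp, boostOp, shiftOp, Matrix.smul_apply, diagonal_mul, of_apply, smul_eq_mul,
    stdChar_eq_stdAddChar, mul_ite, mul_one, mul_zero]
  congr 1
  rw [← AddChar.map_add_eq_mul]
  ring_nf

theorem mubProj_apply (hp : p ≠ 2) (a b x y : GF p m) :
    mubProj p m a b x y = (Fintype.card (GF p m) : ℂ)⁻¹ *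
      stdAddChar p m ((2⁻¹ * a * x ^ 2 + b * x) - (2⁻¹ * a * y ^ 2 + b * y)) := by
  have h2 : (2 : GF p m)⁻¹ * 2 = 1 := inv_mul_cancel₀ (two_ne_zero_of_ne_two p m hp)
  simp only [mubProj, Matrix.smul_apply, Matrix.sum_apply, weylOp_apply, stdChar_eq_stdAddChar,
    smul_eq_mul, mul_ite, mul_zero]
  rw [Fintype.sum_eq_single (x - y) fun l hl => if_neg fun h => hl (by rw [h]; ring),
    if_pos (by ring), ← AddChar.map_add_eq_mul]
  congr 2
  linear_combination (-(a * (x - y) * x)) * h2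

theorem trace_mubProj_mul_mubProj (hp : p ≠ 2) (a a' b b' : GF p m) :
    trace (mubProj p m a b * mubProj p m a' b') = (Fintype.card (GF p m) : ℂ)⁻¹ ^ 2 *
      ∑ x, ∑ y, stdAddChar p m
        ((2⁻¹ * (a - a') * x ^ 2 + (b - b') * x) - (2⁻¹ * (a - a') * y ^ 2 + (b - b') * y)) := by
  simp only [trace, diag_apply, mul_apply, mubProj_apply hp, Finset.mul_sum]
  refine Finset.sum_congr rfl fun x _ => Finset.sum_congr rfl fun y _ => ?_
  rw [mul_mul_mul_comm, ← AddChar.map_add_eq_mul, ← sq]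
  ring_nf

end

theorem mub_overlaps_general (p m : ℕ) [Fact p.Prime] (hp : p ≠ 2)
    (a a' b b' : GF p m) :
    (Matrix.trace (mubProj p m a b * mubProj p m a' b') =
        if a = a' then (if b = b' then 1 else 0)
        else (Fintype.card (GF p m) : ℂ)⁻¹) ∧
    ∀ x : GF p m,
      Matrix.trace (mubProj p m a b * Matrix.single x x (1 : ℂ)) =
        (Fintype.card (GF p m) : ℂ)⁻¹ := by
  have hψ := stdAddChar_isPrimitive p m
  have h2 := two_ne_zero_of_ne_two p m hp
  have hd : (Fintype.card (GF p m) : ℂ) ≠ 0 := by simp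
  refine ⟨?_, fun x => by simp [trace_mul_single, mubProj_apply hp]⟩
  rw [trace_mubProj_mul_mubProj hp]
  by_cases ha : a = a'
  · subst ha
    simp only [sub_self, mul_zero, zero_mul, zero_add, if_true, AddChar.sum_sum_sub_linear hψ,
      sub_eq_zero]
    split_ifs <;> simp [hd]
  · rw [if_neg ha, AddChar.sum_sum_sub_quadratic_of_ne_zero hψ h2
      (mul_ne_zero (inv_ne_zero h2) (sub_ne_zero.mpr ha))]
    field_simp

/-- the stabilizer states `B^{(a)}_b` satisfy
`tr(B^{(a)}_b B^{(a')}_{b'}) = δ_{b,b'}` for `a = a'` and `= 1/d` for `a ≠ a'`;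
moreover they are unbiased with respect to the computational basis. Hence,
together with the computational basis, they form `d+1` mutually unbiased bases
of `ℂ^d`. -/
theorem mub_overlaps (p m : ℕ) [Fact p.Prime] (hp : p ≠ 2) (hm : 0 < m)
    (a a' b b' : GF p m) :
    (Matrix.trace (mubProj p m a b * mubProj p m a' b') =
        if a = a' then (if b = b' then 1 else 0)
        else (Fintype.card (GF p m) : ℂ)⁻¹) ∧
    ∀ x : GF p m,
      Matrix.trace (mubProj p m a b * Matrix.single x x (1 : ℂ)) =
        (Fintype.card (GF p m) : ℂ)⁻¹ :=
  mub_overlaps_general p m hp a a' b b'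
end
end
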